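/- If w is a boolean element of a Coxeter group (i.e., ℓ(w) = |supp(w)|), then every u ≤ w in Bruhat order is also boolean. -/

import Mathlib

/-!
The letters of a reduced word do not depend on the reduced word. If `ω` is reduced, its last
letter `k` is a right descent of `π ω`, and the exchange condition (proved with the parity
representation on `W × ZMod 2`) writes `s k` as a product of letters of any other word `ω'` for
`π ω`; in the geometric representation the `e_k`-coordinate is fixed by every `s j` with `j ≠ k`,
so this forces `k ∈ ω'`. Hence `supp w` is the letter set of any reduced word of `w`, and `w` is
boolean iff it has a reduced word without repeated letters. Every subword of such a word has no
repeated letters, and by the deletion property it contains a reduced word for `u`.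
-/

open Finsupp

noncomputable section

namespace CoxeterMatrix

open Real

variable {B : Type*} (M : CoxeterMatrix B)

/-- `v ↦ B(e_a, v)` for the bilinear form `B(e_a, e_b) = -cos (π / M a b)`; for `M a b = 0`
(`m = ∞`) the junk value `π / 0 = 0` gives the correct `B(e_a, e_b) = -1`. -/
def geomForm (a : B) : (B →₀ ℝ) →ₗ[ℝ] ℝ :=
  linearCombination ℝ fun b => -cos (π / M a b)

theorem geomForm_single (a b : B) : M.geomForm a (single b 1) = -cos (π / M a b) := by
  simp [geomForm]

theorem geomForm_single_self (a : B) : M.geomForm a (single a 1) = 1 := by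
  simp [geomForm_single]

def geomReflection (a : B) : Module.End ℝ (B →₀ ℝ) :=
  LinearMap.id - (2 : ℝ) • (M.geomForm a).smulRight (single a 1)

theorem geomReflection_apply (a : B) (v : B →₀ ℝ) :
    M.geomReflection a v = v - (2 * M.geomForm a v) • single a 1 := by
  simp [geomReflection, mul_smul]

theorem geomReflection_single_self (a : B) :
    M.geomReflection a (single a 1) = -single a 1 := by
  rw [geomReflection_apply, geomForm_single_self]
  module

theorem geomReflection_mul_self (a : B) : M.geomReflection a * M.geomReflection a = 1 :=
  LinearMap.ext fun v => by
    rw [Module.End.mul_apply, geomReflection_apply M a v, map_sub, map_smul,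
      geomReflection_single_self, geomReflection_apply]
    simp only [Module.End.one_apply]
    module

theorem geomReflection_apply_sin (a b : B) (x : ℝ) :
    M.geomReflection a (sin (x - π / M a b) • single a 1 + sin x • single b 1) =
      sin (x + π / M a b) • single a 1 + sin x • single b 1 := by
  have h : sin (x + π / M a b) = 2 * cos (π / M a b) * sin x - sin (x - π / M a b) := by
    rw [sin_add, sin_sub]; ring
  rw [geomReflection_apply, map_add, map_smul, map_smul, geomForm_single_self, geomForm_single, h]
  simp only [smul_eq_mul]
  module

theorem geomReflection_mul_apply_sin (a b : B) (x : ℝ) :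
    (M.geomReflection a * M.geomReflection b)
        (sin x • single a 1 + sin (x - π / M a b) • single b 1) =
      sin (x + 2 * (π / M a b)) • single a 1 +
        sin (x + 2 * (π / M a b) - π / M a b) • single b 1 := by
  have hb := M.geomReflection_apply_sin b a x
  have ha := M.geomReflection_apply_sin a b (x + π / M a b)
  rw [M.symmetric b a] at hb
  rw [add_sub_cancel_right] at ha
  rw [Module.End.mul_apply, add_comm, hb, add_comm, ha]
  ring_nf

theorem geomReflection_mul_pow_apply_sin (a b : B) (k : ℕ) (x : ℝ) :
    ((M.geomReflection a * M.geomReflection b) ^ k)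
        (sin x • single a 1 + sin (x - π / M a b) • single b 1) =
      sin (x + 2 * k * (π / M a b)) • single a 1 +
        sin (x + 2 * k * (π / M a b) - π / M a b) • single b 1 := by
  induction k generalizing x with
  | zero => simp
  | succ k ih =>
    rw [pow_succ, Module.End.mul_apply, geomReflection_mul_apply_sin, ih]
    push_cast
    ring_nf

theorem exists_eq_add_of_geomForm_eq_zero (a b : B) (hc : cos (π / M a b) ^ 2 ≠ 1)
    (v : B →₀ ℝ) : ∃ (x y : ℝ) (z : B →₀ ℝ), M.geomForm a z = 0 ∧ M.geomForm b z = 0 ∧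
      v = x • single a 1 + y • single b 1 + z := by
  set c := cos (π / M a b)
  -- `(x, y)` solves the Gram system `x - c y = B(e_a, v)`, `-c x + y = B(e_b, v)`.
  have hc' : 1 - c ^ 2 ≠ 0 := sub_ne_zero.mpr (Ne.symm hc)
  set x := (M.geomForm a v + c * M.geomForm b v) / (1 - c ^ 2)
  set y := (M.geomForm b v + c * M.geomForm a v) / (1 - c ^ 2)
  have hab := M.geomForm_single a b
  have hba := M.geomForm_single b a
  rw [M.symmetric b a] at hba
  refine ⟨x, y, v - x • single a 1 - y • single b 1, ?_, ?_, by abel⟩ <;>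
  · simp only [map_sub, map_smul, geomForm_single_self, hab, hba, smul_eq_mul, x, y]
    field_simp
    ring

theorem geomReflection_mul_pow_eq_one_of_two_le {a b : B} (hm : 2 ≤ M a b) :
    (M.geomReflection a * M.geomReflection b) ^ M a b = 1 := by
  set T := M.geomReflection a * M.geomReflection b
  set θ := π / M a b
  have hm' : (2 : ℝ) ≤ M a b := by exact_mod_cast hm
  have hθ : 0 < θ := div_pos pi_pos (by linarith)
  have hθπ : θ < π := div_lt_self pi_pos (by linarith)
  have hsin : sin θ ≠ 0 := (sin_pos_of_pos_of_lt_pi hθ hθπ).ne'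
  -- `T` advances these vectors by `2θ`, and `2 (M a b) θ = 2π`.
  have hfix : ∀ x, (T ^ M a b) (sin x • single a 1 + sin (x - θ) • single b 1) =
      sin x • single a 1 + sin (x - θ) • single b 1 := fun x => by
    have h2π : x + 2 * (M a b : ℕ) * θ = x + 2 * π := by
      simp only [θ]; field_simp
    rw [geomReflection_mul_pow_apply_sin, h2π, sin_add_two_pi, add_sub_right_comm, sin_add_two_pi]
  have ha : (T ^ M a b) (single a 1) = single a 1 := by
    have := hfix θ
    rw [sub_self, sin_zero, zero_smul, add_zero, map_smul] at this
    exact smul_right_injective _ hsin this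
  have hb : (T ^ M a b) (single b 1) = single b 1 := by
    have := hfix 0
    rw [zero_sub, sin_zero, zero_smul, zero_add, sin_neg, map_smul] at this
    exact smul_right_injective _ (neg_ne_zero.mpr hsin) this
  have hz : ∀ z, M.geomForm a z = 0 → M.geomForm b z = 0 → (T ^ M a b) z = z := by
    intro z hza hzb
    have hTz : T z = z := by
      simp [T, geomReflection_apply, hza, hzb]
    rw [Module.End.pow_apply]
    exact Function.iterate_fixed hTz _
  have hc : cos θ ^ 2 ≠ 1 := by
    intro h
    have := sin_sq_add_cos_sq θ
    exact hsin (pow_eq_zero_iff two_ne_zero |>.mp (by linarith))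
  refine LinearMap.ext fun v => ?_
  obtain ⟨x, y, z, hza, hzb, rfl⟩ := M.exists_eq_add_of_geomForm_eq_zero a b hc v
  rw [map_add, map_add, map_smul, map_smul, ha, hb, hz z hza hzb, Module.End.one_apply]

theorem geomReflection_isLiftable : M.IsLiftable M.geomReflection := by
  intro a b
  rcases eq_or_ne a b with rfl | hab
  · rw [M.diagonal, pow_one, geomReflection_mul_self]
  rcases Nat.lt_or_ge (M a b) 2 with hm | hm
  · have : M a b = 0 := by have := M.off_diagonal a b hab; omega
    rw [this, pow_zero]
  · exact M.geomReflection_mul_pow_eq_one_of_two_le hm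

end CoxeterMatrix

namespace CoxeterSystem

open List

variable {B W : Type*} [Group W] {M : CoxeterMatrix B} (cs : CoxeterSystem M W)

local prefix:100 "s" => cs.simple
local prefix:100 "π" => cs.wordProd
local prefix:100 "ris " => cs.rightInvSeq
local prefix:100 "lis " => cs.leftInvSeq

def geomRep : W →* Module.End ℝ (B →₀ ℝ) :=
  cs.lift ⟨M.geomReflection, M.geomReflection_isLiftable⟩

theorem geomRep_simple (i : B) : cs.geomRep (s i) = M.geomReflection i :=
  cs.lift_apply_simple _ i

theorem geomRep_wordProd_apply_of_notMem {ω : List B} {k : B} (hk : k ∉ ω) (v : B →₀ ℝ) :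
    cs.geomRep (π ω) v k = v k := by
  induction ω with
  | nil => simp
  | cons j ω ih =>
    rw [mem_cons, not_or] at hk
    rw [wordProd_cons, map_mul, Module.End.mul_apply, geomRep_simple,
      CoxeterMatrix.geomReflection_apply]
    simp [single_eq_of_ne hk.1, ih hk.2]

theorem mem_of_wordProd_eq_simple {ω : List B} {k : B} (h : π ω = s k) : k ∈ ω := by
  by_contra hk
  have := cs.geomRep_wordProd_apply_of_notMem hk (single k 1)
  rw [h, geomRep_simple, CoxeterMatrix.geomReflection_single_self] at this
  norm_num at this

theorem wordProd_alternatingWord_add_two_mul (i j : B) (n : ℕ) :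
    π (alternatingWord j i (n + 2 * M i j)) = π (alternatingWord j i n) := by
  have hdiv : (n + 2 * M i j) / 2 = n / 2 + M i j := by omega
  simp only [prod_alternatingWord_eq_mul_pow, hdiv, pow_add, simple_mul_simple_pow', mul_one,
    Nat.even_add, even_two_mul, iff_true]

section Parity

variable [DecidableEq W]

/-- The action of `s i` in the representation of `W` on `W × ZMod 2` used in the standard proof
of the strong exchange condition. -/
def parityAction (i : B) : Function.End (W × ZMod 2) :=
  fun p => (s i * p.1 * s i, p.2 + if p.1 = s i then 1 else 0)

theorem prod_map_parityAction_apply (ω : List B) (t : W) (ε : ZMod 2) :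
    (ω.map cs.parityAction).prod (t, ε) = (π ω * t * (π ω)⁻¹, ε + (ris ω).count t) := by
  induction ω with
  | nil => simp [Function.End.one_def]
  | cons i ω ih =>
    have hcond : (π ω * t * (π ω)⁻¹ = s i) ↔ ((π ω)⁻¹ * s i * π ω = t) := by
      constructor <;> intro h <;> rw [← h] <;> group
    rw [map_cons, prod_cons]
    change cs.parityAction i ((ω.map cs.parityAction).prod (t, ε)) = _
    rw [ih]
    simp only [parityAction, rightInvSeq, wordProd_cons, count_cons, beq_iff_eq, hcond,
      Prod.mk.injEq, Nat.cast_add, Nat.cast_ite, Nat.cast_one, Nat.cast_zero]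
    constructor
    · simp only [mul_inv_rev, inv_simple, mul_assoc]
    · ring

theorem parityAction_mul_pow (a b : B) (m : ℕ) :
    (cs.parityAction a * cs.parityAction b) ^ m =
      ((alternatingWord b a (2 * m)).reverse.map cs.parityAction).prod := by
  induction m with
  | zero => simp [alternatingWord]
  | succ m ih =>
    rw [pow_succ', ih, show 2 * (m + 1) = 2 * m + 1 + 1 by ring, alternatingWord_succ,
      alternatingWord_succ]
    simp [mul_assoc]

theorem even_count_leftInvSeq_alternatingWord (i j : B) (t : W) :
    Even ((lis (alternatingWord i j (2 * M i j))).count t) := by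
  set L := lis (alternatingWord i j (2 * M i j))
  have hL : L.length = 2 * M i j := by simp [L]
  have hperiod : L.drop (M i j) = L.take (M i j) := by
    refine ext_getElem (by simp [hL]; omega) fun k hk _ => ?_
    rw [length_drop, hL] at hk
    simp only [getElem_drop, getElem_take, L]
    rw [getElem_leftInvSeq_alternatingWord _ _ _ _ _ (by omega),
      getElem_leftInvSeq_alternatingWord _ _ _ _ _ (by omega),
      show 2 * (M i j + k) + 1 = 2 * k + 1 + 2 * M i j by ring,
      wordProd_alternatingWord_add_two_mul]
  rw [← take_append_drop (M i j) L, count_append, hperiod]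
  exact ⟨_, rfl⟩

theorem parityAction_isLiftable : M.IsLiftable cs.parityAction := by
  intro a b
  funext ⟨t, ε⟩
  have hprod : π (alternatingWord b a (2 * M a b)) = 1 := by
    simpa [alternatingWord] using cs.wordProd_alternatingWord_add_two_mul a b 0
  have hcount := cs.even_count_leftInvSeq_alternatingWord b a t
  rw [M.symmetric b a, ← count_reverse, ← rightInvSeq_reverse] at hcount
  rw [parityAction_mul_pow, prod_map_parityAction_apply, wordProd_reverse, hprod,
    (ZMod.natCast_eq_zero_iff_even).mpr hcount]
  simp [Function.End.one_def]

def parityRep : W →* Function.End (W × ZMod 2) :=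
  cs.lift ⟨cs.parityAction, cs.parityAction_isLiftable⟩

theorem parityRep_wordProd (ω : List B) : cs.parityRep (π ω) = (ω.map cs.parityAction).prod := by
  rw [wordProd, map_list_prod, map_map]
  congr 2
  funext i
  exact cs.lift_apply_simple _ i

theorem count_rightInvSeq_eq_of_wordProd_eq {ω ω' : List B} (h : π ω = π ω') (t : W) :
    ((ris ω).count t : ZMod 2) = (ris ω').count t := by
  have := congrArg (fun f => (cs.parityRep f (t, 0)).2) h
  simpa [parityRep_wordProd, prod_map_parityAction_apply] using this

theorem count_simple_rightInvSeq_concat (ω : List B) (i : B) :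
    (ris (ω.concat i)).count (s i) = (ris ω).count (s i) + 1 := by
  have hconj : MulAut.conj (s i) (s i) = s i := by simp
  have := count_map_of_injective (ris ω) _ (MulAut.conj (s i)).injective (s i)
  rw [hconj] at this
  rw [rightInvSeq_concat, count_concat_self, this]

end Parity

theorem simple_mem_rightInvSeq_of_isRightDescent {ω : List B} {i : B}
    (h : cs.IsRightDescent (π ω) i) : s i ∈ ris ω := by
  classical
  -- Otherwise `s i` occurs an odd number of times in the inversion sequence of a reduced word
  -- for `π ω * s i`, making `s i` a right descent of `π ω * s i` as well.
  by_contra hi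
  obtain ⟨ν, hν, hνω⟩ := cs.exists_isReduced (π ω * s i)
  have hcount : ((ris ν).count (s i) : ZMod 2) = 1 := by
    rw [← cs.count_rightInvSeq_eq_of_wordProd_eq (ω := ω.concat i) (by rw [wordProd_concat, hνω]),
      count_simple_rightInvSeq_concat, count_eq_zero_of_not_mem hi]
    simp
  have hmem : s i ∈ ris ν := by
    by_contra h'
    rw [count_eq_zero_of_not_mem h'] at hcount
    exact zero_ne_one hcount
  have := (cs.isRightInversion_of_mem_rightInvSeq hν hmem).2
  rw [← hνω, simple_mul_simple_cancel_right] at this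
  exact lt_asymm h this

theorem exists_wordProd_mul_simple_eq_eraseIdx {ω : List B} {i : B}
    (h : cs.IsRightDescent (π ω) i) : ∃ j < ω.length, π ω * s i = π (ω.eraseIdx j) := by
  obtain ⟨j, hj, hget⟩ := mem_iff_getElem.mp (cs.simple_mem_rightInvSeq_of_isRightDescent h)
  refine ⟨j, by simpa using hj, ?_⟩
  rw [← hget, ← getD_eq_getElem _ 1 hj, wordProd_mul_getD_rightInvSeq]

theorem exists_isReduced_sublist (ω : List B) :
    ∃ ν, ν <+ ω ∧ cs.IsReduced ν ∧ π ν = π ω := by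
  induction ω using reverseRecOn with
  | nil => exact ⟨[], .refl _, by simp [IsReduced], rfl⟩
  | append_singleton ω i ih =>
    obtain ⟨ν, hsub, hν, hprod⟩ := ih
    have hprod' : π (ν ++ [i]) = π (ω ++ [i]) := by simp [wordProd_append, hprod]
    by_cases hdesc : cs.IsRightDescent (π ν) i
    · obtain ⟨j, hj, hj'⟩ := cs.exists_wordProd_mul_simple_eq_eraseIdx hdesc
      refine ⟨ν.eraseIdx j, (eraseIdx_sublist _ _).trans (hsub.trans (sublist_append_left _ _)),
        ?_, by rw [← hj', ← hprod', wordProd_append, wordProd_singleton]⟩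
      have := cs.isRightDescent_iff.mp hdesc
      rw [IsReduced, ← hj', length_eraseIdx_of_lt hj, ← hν.eq]
      omega
    · refine ⟨ν ++ [i], hsub.append (.refl _), ?_, hprod'⟩
      have := cs.not_isRightDescent_iff.mp hdesc
      rw [IsReduced, wordProd_append, wordProd_singleton, length_append, this, hν.eq,
        length_singleton]

theorem mem_of_isRightDescent {ω : List B} {k : B} (h : cs.IsRightDescent (π ω) k) : k ∈ ω := by
  obtain ⟨j, -, hj⟩ := cs.exists_wordProd_mul_simple_eq_eraseIdx h
  have : π (ω.reverse ++ ω.eraseIdx j) = s k := by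
    rw [wordProd_append, wordProd_reverse, ← hj, inv_mul_cancel_left]
  rcases mem_append.mp (cs.mem_of_wordProd_eq_simple this) with h | h
  · exact mem_reverse.mp h
  · exact (eraseIdx_sublist _ _).subset h

theorem subset_of_isReduced_of_wordProd_eq {ω ω' : List B} (hω : cs.IsReduced ω)
    (h : π ω = π ω') : ω ⊆ ω' := by
  induction ω using reverseRecOn generalizing ω' with
  | nil => exact nil_subset _
  | append_singleton ω k ih =>
    have hω' : cs.IsReduced ω := by simpa using hω.take ω.length
    have hk : cs.IsRightDescent (π ω') k := by
      rw [← h, isRightDescent_iff, wordProd_append, wordProd_singleton,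
        simple_mul_simple_cancel_right, hω'.eq, ← wordProd_singleton, ← wordProd_append, hω.eq,
        length_append, length_singleton]
    have hsub := ih hω' (ω' := ω' ++ [k]) (by
      rw [wordProd_append, wordProd_singleton, ← h, wordProd_append, wordProd_singleton,
        simple_mul_simple_cancel_right])
    intro x hx
    rcases mem_append.mp hx with hx | hx
    · rcases mem_append.mp (hsub hx) with hx | hx
      · exact hx
      · rw [mem_singleton.mp hx]; exact cs.mem_of_isRightDescent hk
    · rw [mem_singleton.mp hx]; exact cs.mem_of_isRightDescent hk

end CoxeterSystem

end

namespace Paper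
open List

variable {B W : Type*} [DecidableEq B] [Group W] {M : CoxeterMatrix B}

/-- `ω` is a reduced word for `w`. -/
def IsReducedWord (cs : CoxeterSystem M W) (w : W) (ω : List B) : Prop :=
  cs.wordProd ω = w ∧ ω.length = cs.length w

/-- The support of `w`: the set of (indices of) simple reflections appearing in some
reduced word of `w`. -/
def Supp (cs : CoxeterSystem M W) (w : W) : Set B :=
  {i | ∃ ω, IsReducedWord cs w ω ∧ i ∈ ω}

/-- `w` is a product of pairwise distinct simple reflections. -/
def IsBoolean (cs : CoxeterSystem M W) (w : W) : Prop :=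
  ∃ ω : List B, ω.Nodup ∧ cs.wordProd ω = w

/-- Bruhat order, characterized via the subword property. -/
def BruhatLE (cs : CoxeterSystem M W) (u w : W) : Prop :=
  ∃ ω ω' : List B, IsReducedWord cs w ω ∧ ω'.Sublist ω ∧ cs.wordProd ω' = u

/-- `s` occurs (strictly) before `t` in the list `ω`. -/
def PrecedesIn (ω : List B) (s t : B) : Prop :=
  ∃ i j : Fin ω.length, (i : ℕ) < (j : ℕ) ∧ ω.get i = s ∧ ω.get j = t

theorem supp_wordProd (cs : CoxeterSystem M W) {ω : List B} (hω : cs.IsReduced ω) :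
    Supp cs (cs.wordProd ω) = ω.toFinset := by
  ext i
  rw [coe_toFinset, Set.mem_ofPred_eq]
  constructor
  · rintro ⟨ν, ⟨hν, hνlen⟩, hi⟩
    exact cs.subset_of_isReduced_of_wordProd_eq (by rw [CoxeterSystem.IsReduced, hν, hνlen]) hν hi
  · exact fun hi => ⟨ω, ⟨rfl, hω.symm⟩, hi⟩

theorem length_eq_ncard_supp_iff_nodup (cs : CoxeterSystem M W) {ω : List B}
    (hω : cs.IsReduced ω) :
    cs.length (cs.wordProd ω) = (Supp cs (cs.wordProd ω)).ncard ↔ ω.Nodup := by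
  rw [supp_wordProd cs hω, hω.eq, Set.ncard_coe_finset, eq_comm]
  exact Multiset.toFinset_card_eq_card_iff_nodup

/-- If `w` is boolean (`ℓ(w) = |supp(w)|`) and `u ≤ w` in Bruhat order, then `u` is boolean. -/
theorem stmt2 (cs : CoxeterSystem M W) (u w : W)
    (hw : cs.length w = (Supp cs w).ncard) (hle : BruhatLE cs u w) :
    cs.length u = (Supp cs u).ncard := by
  obtain ⟨ω, ω', ⟨rfl, hωlen⟩, hsub, rfl⟩ := hle
  have hω : cs.IsReduced ω := hωlen.symm
  obtain ⟨ν, hνsub, hν, hνprod⟩ := cs.exists_isReduced_sublist ω'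
  rw [← hνprod, length_eq_ncard_supp_iff_nodup cs hν]
  exact (((length_eq_ncard_supp_iff_nodup cs hω).mp hw).sublist hsub).sublist hνsub

end Paper
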